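/- arXiv:0905.0567 — 2 statements merged into one kernel-verified Lean document; each statement's English description precedes it below -/
import Mathlib

section
/- For every tournament T, every vertex v of T, and every minimal feedback vertex set F of T - v, either F or F ∪ {v} is a minimal feedback vertex set of T. -/
/-- A set `W` of vertices is acyclic if the digraph `r` restricted to `W`
has no directed cycle (the transitive closure restricted to `W` is irreflexive). -/
def AcyclicOn {V : Type*} (r : V → V → Prop) (W : Set V) : Prop :=
  ∀ v : V, ¬ Relation.TransGen (fun a b => a ∈ W ∧ b ∈ W ∧ r a b) v v

/-- A tournament: an irreflexive relation with exactly one arc between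
every pair of distinct vertices. -/
def IsTournament {V : Type*} (r : V → V → Prop) : Prop :=
  (∀ v : V, ¬ r v v) ∧ ∀ u v : V, u ≠ v → (r u v ↔ ¬ r v u)

/-- A feedback vertex set: its deletion leaves an acyclic digraph. -/
def IsFVS {V : Type*} (r : V → V → Prop) (F : Set V) : Prop :=
  AcyclicOn r Fᶜ

/-- A minimal feedback vertex set. -/
def IsMinimalFVS {V : Type*} (r : V → V → Prop) (F : Set V) : Prop :=
  IsFVS r F ∧ ∀ F' : Set V, F' ⊆ F → IsFVS r F' → F' = F

/-- A feedback vertex set of the subtournament induced on `S`. -/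
def IsFVSOn {V : Type*} (r : V → V → Prop) (S F : Set V) : Prop :=
  F ⊆ S ∧ AcyclicOn r (S \ F)

/-- A minimal feedback vertex set of the subtournament induced on `S`. -/
def IsMinimalFVSOn {V : Type*} (r : V → V → Prop) (S F : Set V) : Prop :=
  IsFVSOn r S F ∧ ∀ F' : Set V, F' ⊆ F → IsFVSOn r S F' → F' = F

/-- Strong (strongly connected): a directed path between any ordered pair. -/
def IsStrong {V : Type*} (r : V → V → Prop) : Prop :=
  ∀ u v : V, Relation.ReflTransGen r u v

/-- The subtournament induced on `S` is strong. -/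
def IsStrongOn {V : Type*} (r : V → V → Prop) (S : Set V) : Prop :=
  ∀ u ∈ S, ∀ v ∈ S, Relation.ReflTransGen (fun a b => a ∈ S ∧ b ∈ S ∧ r a b) u v

/-- The score (out-degree) of a vertex. -/
noncomputable def outScore {V : Type*} (r : V → V → Prop) (v : V) : ℕ :=
  {u : V | r v u}.ncard

/-- The number of minimal feedback vertex sets of a tournament. -/
noncomputable def fvsCount (V : Type*) (r : V → V → Prop) : ℕ :=
  {F : Set V | IsMinimalFVS r F}.ncard

/-- `maxMinFVS n` = maximum number of minimal FVSs over all `n`-vertex tournaments. -/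
noncomputable def maxMinFVS (n : ℕ) : ℕ :=
  sSup {k : ℕ | ∃ r : Fin n → Fin n → Prop, IsTournament r ∧ fvsCount (Fin n) r = k}

/-! If `F` already destroys every cycle of `T`, any feedback vertex set of `T` inside `F` is one
of `T - v` too, so minimality in `T - v` transfers. Otherwise `F ∪ {v}` is a feedback vertex set,
since `T - (F ∪ {v}) = (T - v) - F`; a smaller one either avoids `v`, and then lies in `F` and makes
`F` a feedback vertex set of `T`, or contains `v`, and then dropping `v` gives a feedback vertex set
of `T - v` inside `F`, which must be `F` itself. -/

section

variable {V : Type*} {r : V → V → Prop}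

theorem AcyclicOn.mono {W W' : Set V} (h : AcyclicOn r W) (hW : W' ⊆ W) : AcyclicOn r W' :=
  fun x hx => h x (Relation.TransGen.mono (fun _ _ ⟨ha, hb, hab⟩ => ⟨hW ha, hW hb, hab⟩) x x hx)

theorem IsFVS.mono {F G : Set V} (h : IsFVS r F) (hFG : F ⊆ G) : IsFVS r G :=
  AcyclicOn.mono h (Set.compl_subset_compl.mpr hFG)

theorem IsFVS.isFVSOn {S F : Set V} (h : IsFVS r F) (hF : F ⊆ S) : IsFVSOn r S F :=
  ⟨hF, AcyclicOn.mono h fun _ hx => hx.2⟩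

theorem isFVSOn_compl_singleton_iff {v : V} {F : Set V} :
    IsFVSOn r {v}ᶜ F ↔ v ∉ F ∧ IsFVS r (insert v F) := by
  have hcompl : ({v}ᶜ \ F : Set V) = (insert v F)ᶜ := by
    rw [Set.sdiff_eq_compl_inter, ← Set.compl_union, Set.union_singleton]
  rw [IsFVSOn, IsFVS, hcompl, Set.subset_compl_singleton_iff]

theorem IsMinimalFVSOn.isMinimalFVS_of_isFVS {S F : Set V} (hF : IsMinimalFVSOn r S F)
    (hFVS : IsFVS r F) : IsMinimalFVS r F :=
  ⟨hFVS, fun F' hF' hF'FVS => hF.2 F' hF' (hF'FVS.isFVSOn (hF'.trans hF.1.1))⟩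

theorem IsMinimalFVSOn.isMinimalFVS_insert {v : V} {F : Set V}
    (hF : IsMinimalFVSOn r {v}ᶜ F) (hFVS : ¬ IsFVS r F) : IsMinimalFVS r (insert v F) := by
  obtain ⟨-, hinsert⟩ := isFVSOn_compl_singleton_iff.mp hF.1
  refine ⟨hinsert, fun F' hF' hF'FVS => ?_⟩
  by_cases hv : v ∈ F'
  · have hsub : F' \ {v} ⊆ F := fun x hx => (hF' hx.1).resolve_left hx.2
    have hdrop : IsFVSOn r {v}ᶜ (F' \ {v}) := by
      rw [isFVSOn_compl_singleton_iff, Set.insert_sdiff_singleton, Set.insert_eq_of_mem hv]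
      exact ⟨fun h => h.2 rfl, hF'FVS⟩
    rw [← hF.2 _ hsub hdrop, Set.insert_sdiff_singleton, Set.insert_eq_of_mem hv]
  · exact absurd (hF'FVS.mono fun x hx => (hF' hx).resolve_left (by rintro rfl; exact hv hx))
      hFVS

end

theorem stmt7_general {V : Type*} (r : V → V → Prop)
    (v : V) (F : Set V) (hF : IsMinimalFVSOn r {v}ᶜ F) :
    IsMinimalFVS r F ∨ IsMinimalFVS r (insert v F) := by
  by_cases hFVS : IsFVS r F
  · exact Or.inl (hF.isMinimalFVS_of_isFVS hFVS)
  · exact Or.inr (hF.isMinimalFVS_insert hFVS)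

/-- For every tournament `T`, vertex `v`, and minimal FVS `F` of `T - v`,
either `F` or `F ∪ {v}` is a minimal FVS of `T`. -/
theorem stmt7 {V : Type*} [Fintype V] (r : V → V → Prop) (hT : IsTournament r)
    (v : V) (F : Set V) (hF : IsMinimalFVSOn r {v}ᶜ F) :
    IsMinimalFVS r F ∨ IsMinimalFVS r (insert v F) :=
  stmt7_general r v F hF
end

section
/- In a strong tournament, the non-decreasing score sequence s_1 ≤ ... ≤ s_n satisfies the strict Landau inequalities: for every k with 1 ≤ k ≤ n-1, s_1 + ... + s_k ≥ C(k,2) + 1, and s_1 + ... + s_n = C(n,2). -/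
/-!
An arc leaving a proper nonempty vertex set `S` exists because the tournament is strong; it
contributes to the scores of `S` without being one of the `C(|S|, 2)` arcs inside `S`, which are
counted by the scores restricted to `S`.
-/

open Finset

section

variable {V : Type*} {r : V → V → Prop}

lemma Relation.ReflTransGen.exists_arc_out {S : Set V} {u v : V}
    (h : Relation.ReflTransGen r u v) (hu : u ∈ S) (hv : v ∉ S) :
    ∃ a ∈ S, ∃ b ∉ S, r a b := by
  induction h with
  | refl => exact absurd hu hv
  | @tail b c _ hbc ih =>
    by_cases hb : b ∈ S
    · exact ⟨b, hb, c, hv, hbc⟩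
    · exact ih hb

lemma outScore_eq_card_filter [Fintype V] [DecidableRel r] (v : V) :
    outScore r v = #{u | r v u} := by
  rw [outScore, Set.ncard_eq_toFinset_card', Set.toFinset_ofPred]

namespace IsTournament

lemma ite_add_ite [DecidableRel r] [DecidableEq V] (hT : IsTournament r) (u v : V) :
    ((if r u v then 1 else 0) + if r v u then 1 else 0) = if u = v then 0 else 1 := by
  by_cases huv : u = v
  · subst huv
    simp [hT.1 u]
  · by_cases h : r u v
    · simp [h, (hT.2 u v huv).1 h, huv]
    · simp [h, not_not.1 (mt (hT.2 u v huv).2 h), huv]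

theorem sum_card_filter_eq_choose_two [DecidableRel r] (hT : IsTournament r)
    (S : Finset V) : ∑ v ∈ S, #{u ∈ S | r v u} = (#S).choose 2 := by
  classical
  set X := ∑ v ∈ S, #{u ∈ S | r v u}
  have hX : X = ∑ v ∈ S, ∑ u ∈ S, if r v u then 1 else 0 := by simp only [X, card_filter]
  have hdouble : 2 * X = #S * (#S - 1) := calc
    2 * X = ∑ v ∈ S, ∑ u ∈ S, ((if r v u then 1 else 0) + if r u v then 1 else 0) := by
      rw [two_mul]
      nth_rw 2 [hX]
      rw [sum_comm, hX, ← sum_add_distrib]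
      simp only [← sum_add_distrib]
    _ = ∑ v ∈ S, #(S.erase v) := by
      refine sum_congr rfl fun v _ => ?_
      rw [← filter_ne', card_filter]
      exact sum_congr rfl fun u _ => by rw [hT.ite_add_ite, ite_not, @eq_comm _ u]
    _ = #S * (#S - 1) := by
      rw [sum_congr rfl fun v hv => card_erase_of_mem hv, sum_const, smul_eq_mul]
  rw [Nat.choose_two_right]
  omega

theorem sum_outScore [Fintype V] (hT : IsTournament r) :
    ∑ v, outScore r v = (Fintype.card V).choose 2 := by
  classical
  rw [← card_univ, ← hT.sum_card_filter_eq_choose_two]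
  simp only [outScore_eq_card_filter]

theorem choose_two_lt_sum_outScore [Fintype V] (hT : IsTournament r) (hS : IsStrong r)
    {S : Finset V} (hne : S.Nonempty) (hproper : S ≠ univ) :
    (#S).choose 2 < ∑ v ∈ S, outScore r v := by
  classical
  obtain ⟨u, hu⟩ := hne
  obtain ⟨w, hw⟩ : ∃ w, w ∉ S := by simpa [eq_univ_iff_forall] using hproper
  obtain ⟨a, ha, b, hb, hab⟩ :=
    (hS u w).exists_arc_out (S := (S : Set V)) (mem_coe.2 hu) (mt mem_coe.1 hw)
  rw [← hT.sum_card_filter_eq_choose_two]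
  simp only [outScore_eq_card_filter]
  refine sum_lt_sum (fun v _ => card_le_card (filter_subset_filter _ (subset_univ S)))
    ⟨a, ha, card_lt_card ?_⟩
  exact (ssubset_iff_of_subset (filter_subset_filter _ (subset_univ S))).2
    ⟨b, by simpa using hab, fun hb' => hb (mem_filter.1 hb').1⟩

end IsTournament

end

theorem stmt13_general {V : Type*} (n : ℕ)
    (r : V → V → Prop) (hT : IsTournament r) (hS : IsStrong r)
    (e : Fin n ≃ V) :
    (∀ k : ℕ, 1 ≤ k → k ≤ n - 1 →
      k.choose 2 + 1 ≤ ∑ i : Fin n, if (i : ℕ) < k then outScore r (e i) else 0) ∧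
    (∑ i : Fin n, outScore r (e i)) = n.choose 2 := by
  classical
  let : Fintype V := .ofEquiv _ e
  have hcard : Fintype.card V = n := by simp [Fintype.card_congr e.symm]
  refine ⟨fun k hk hkn => ?_, ?_⟩
  · set S : Finset V := ({i | (i : ℕ) < k} : Finset (Fin n)).map e.toEmbedding
    have hSk : #S = k := by rw [card_map, Fin.card_filter_val_lt]; omega
    have hsum : (∑ i : Fin n, if (i : ℕ) < k then outScore r (e i) else 0)
        = ∑ v ∈ S, outScore r v := by
      rw [sum_map, sum_filter]
      rfl
    rw [hsum, ← hSk]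
    refine hT.choose_two_lt_sum_outScore hS (card_pos.1 (by omega)) fun hSuniv => ?_
    rw [hSuniv, card_univ] at hSk
    omega
  · rw [e.sum_comp (outScore r), hT.sum_outScore, hcard]

/-- Landau's inequalities for strong tournaments: for a non-decreasing enumeration
of the scores, every proper initial segment sums to at least `C(k,2) + 1`, and all
scores sum to `C(n,2)`. -/
theorem stmt13 {V : Type*} [Fintype V] (n : ℕ) (hcard : Fintype.card V = n)
    (r : V → V → Prop) (hT : IsTournament r) (hS : IsStrong r)
    (e : Fin n ≃ V) (hmono : Monotone fun i : Fin n => outScore r (e i)) :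
    (∀ k : ℕ, 1 ≤ k → k ≤ n - 1 →
      k.choose 2 + 1 ≤ ∑ i : Fin n, if (i : ℕ) < k then outScore r (e i) else 0) ∧
    (∑ i : Fin n, outScore r (e i)) = n.choose 2 :=
  stmt13_general n r hT hS e
end
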